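/- arXiv:1307.6037 — 3 statements merged into one kernel-verified Lean document; each statement's English description precedes it below -/
import Mathlib

section
/- Let ρ be an (nm)×(nm) complex matrix (indexed by pairs (k,l), 1≤k≤n, 1≤l≤m), let u_1 be an n×n complex unitary matrix and u_2 an m×m complex unitary matrix, and set ρ̃ = (u_1 ⊗ u_2) ρ (u_1 ⊗ u_2)†, where ⊗ is the Kronecker product. If A_1,…,A_I is a matrix decomposition of ρ and B_1,…,B_I is a matrix decomposition of ρ̃, then the Gram matrices Ω(A) and Ω(B) have equal characteristic polynomials. In particular, equality of all the coefficients F_i of these characteristic polynomials is a necessary condition for two states to be equivalent under local unitary transformations. -/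
open Matrix Kronecker

/-- The Gram matrix of a family of `n × m` complex matrices:
`Ω(A)_{ij} = tr(A_i A_j†)`. -/
noncomputable def gramMatrix {I n m : ℕ} (A : Fin I → Matrix (Fin n) (Fin m) ℂ) :
    Matrix (Fin I) (Fin I) ℂ :=
  Matrix.of fun i j => (A i * (A j)ᴴ).trace

/-- `A_1, …, A_I` is a matrix decomposition of the `(nm)×(nm)` matrix `ρ` if
`ρ_{(k,l),(k',l')} = Σ_i (A_i)_{kl} conj((A_i)_{k'l'})`. -/
def IsMatrixDecomposition {I n m : ℕ} (A : Fin I → Matrix (Fin n) (Fin m) ℂ)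
    (ρ : Matrix (Fin n × Fin m) (Fin n × Fin m) ℂ) : Prop :=
  ∀ k l k' l', ρ (k, l) (k', l') = ∑ i, A i k l * (starRingEnd ℂ) (A i k' l')

section Aux

variable {α β : Type*} [Fintype α] [DecidableEq α] [Fintype β] [DecidableEq β]

lemma my_eval_charpoly (M : Matrix α α ℂ) (t : ℂ) :
    M.charpoly.eval t = (t • (1 : Matrix α α ℂ) - M).det := by
  rw [Matrix.charpoly, ← Polynomial.coe_evalRingHom, RingHom.map_det]
  congr 1
  ext i j
  by_cases h : i = j
  · subst h
    simp [Matrix.charmatrix_apply_eq, Matrix.one_apply]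
  · simp [Matrix.charmatrix_apply_ne _ _ _ h, Matrix.one_apply_ne h]

lemma my_charpoly_transpose (M : Matrix α α ℂ) : Mᵀ.charpoly = M.charpoly := by
  apply Polynomial.funext
  intro t
  rw [my_eval_charpoly, my_eval_charpoly,
    ← Matrix.det_transpose (t • (1 : Matrix α α ℂ) - Mᵀ)]
  congr 1
  ext i j
  simp [Matrix.one_apply, eq_comm]

/-- If `P Pᴴ = Q Qᴴ`, then `Pᴴ P` and `Qᴴ Q` have the same characteristic polynomial. -/
lemma charpoly_conj_mul_eq (P Q : Matrix α β ℂ) (h : P * Pᴴ = Q * Qᴴ) :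
    (Pᴴ * P).charpoly = (Qᴴ * Q).charpoly := by
  apply Polynomial.eq_of_infinite_eval_eq
  apply Set.Infinite.mono (s := {x : ℂ | x ≠ 0})
  · intro t ht
    simp only [Set.mem_setOf_eq] at ht ⊢
    have key : ∀ R : Matrix α β ℂ, ((Rᴴ * R).charpoly).eval t =
        t ^ Fintype.card β * (1 - t⁻¹ • (R * Rᴴ)).det := by
      intro R
      rw [my_eval_charpoly]
      have h1 : t • (1 : Matrix β β ℂ) - Rᴴ * R = t • (1 - t⁻¹ • (Rᴴ * R)) := by
        rw [smul_sub, smul_smul, mul_inv_cancel₀ ht, one_smul]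
      rw [h1, Matrix.det_smul]
      congr 1
      rw [← Matrix.mul_smul, Matrix.det_one_sub_mul_comm, Matrix.smul_mul]
    rw [key P, key Q, h]
  · apply Set.infinite_of_finite_compl
    have : {x : ℂ | x ≠ 0}ᶜ = {0} := by
      ext x; simp
    rw [this]
    exact Set.finite_singleton 0

end Aux

theorem stmt3 {I n m : ℕ} (ρ ρ' : Matrix (Fin n × Fin m) (Fin n × Fin m) ℂ)
    (u₁ : Matrix (Fin n) (Fin n) ℂ) (u₂ : Matrix (Fin m) (Fin m) ℂ)
    (hu₁ : u₁ ∈ Matrix.unitaryGroup (Fin n) ℂ) (hu₂ : u₂ ∈ Matrix.unitaryGroup (Fin m) ℂ)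
    (hρ' : ρ' = (u₁ ⊗ₖ u₂) * ρ * (u₁ ⊗ₖ u₂)ᴴ)
    (A B : Fin I → Matrix (Fin n) (Fin m) ℂ)
    (hA : IsMatrixDecomposition A ρ) (hB : IsMatrixDecomposition B ρ') :
    (gramMatrix A).charpoly = (gramMatrix B).charpoly := by
  classical
  set U : Matrix (Fin n × Fin m) (Fin n × Fin m) ℂ := u₁ ⊗ₖ u₂ with hU
  set P : Matrix (Fin n × Fin m) (Fin I) ℂ := Matrix.of (fun x i => A i x.1 x.2) with hP
  set Q : Matrix (Fin n × Fin m) (Fin I) ℂ := Matrix.of (fun x i => B i x.1 x.2) with hQ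
  have hρP : ρ = P * Pᴴ := by
    ext ⟨k, l⟩ ⟨k', l'⟩
    rw [hA k l k' l']
    simp [hP, Matrix.mul_apply, Matrix.conjTranspose_apply]
  have hρQ : ρ' = Q * Qᴴ := by
    ext ⟨k, l⟩ ⟨k', l'⟩
    rw [hB k l k' l']
    simp [hQ, Matrix.mul_apply, Matrix.conjTranspose_apply]
  have hUH : Uᴴ * U = 1 := by
    have h1 : u₁ᴴ * u₁ = 1 := by
      have := Matrix.mem_unitaryGroup_iff'.mp hu₁
      rwa [Matrix.star_eq_conjTranspose] at this
    have h2 : u₂ᴴ * u₂ = 1 := by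
      have := Matrix.mem_unitaryGroup_iff'.mp hu₂
      rwa [Matrix.star_eq_conjTranspose] at this
    have hkron : Uᴴ = u₁ᴴ ⊗ₖ u₂ᴴ := by
      ext ⟨k, l⟩ ⟨k', l'⟩
      simp [hU, Matrix.conjTranspose_apply, Matrix.kroneckerMap_apply]
    rw [hkron, hU, ← Matrix.mul_kronecker_mul, h1, h2, Matrix.one_kronecker_one]
  have hgramA : gramMatrix A = (Pᴴ * P)ᵀ := by
    ext i j
    simp only [gramMatrix, Matrix.of_apply, Matrix.trace, Matrix.diag,
      Matrix.mul_apply, Matrix.conjTranspose_apply, Matrix.transpose_apply, hP]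
    rw [← Finset.sum_product', Finset.univ_product_univ]
    exact Finset.sum_congr rfl fun x _ => mul_comm _ _
  have hgramB : gramMatrix B = (Qᴴ * Q)ᵀ := by
    ext i j
    simp only [gramMatrix, Matrix.of_apply, Matrix.trace, Matrix.diag,
      Matrix.mul_apply, Matrix.conjTranspose_apply, Matrix.transpose_apply, hQ]
    rw [← Finset.sum_product', Finset.univ_product_univ]
    exact Finset.sum_congr rfl fun x _ => mul_comm _ _
  rw [hgramA, hgramB, my_charpoly_transpose, my_charpoly_transpose]
  -- key step: (U * P) plays the role of P
  have hUP : (U * P)ᴴ * (U * P) = Pᴴ * P := by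
    rw [Matrix.conjTranspose_mul, Matrix.mul_assoc, ← Matrix.mul_assoc Uᴴ U P, hUH,
      Matrix.one_mul]
  rw [← hUP]
  apply charpoly_conj_mul_eq
  have hexp : U * P * (U * P)ᴴ = U * (P * Pᴴ) * Uᴴ := by
    simp only [Matrix.conjTranspose_mul, Matrix.mul_assoc]
  rw [hexp, ← hρP, ← hρ', hρQ]
end

section
/- (Unitary freedom in ensembles) Let v_1,…,v_I and w_1,…,w_I be vectors in ℂ^d such that Σ_{i=1}^I v_i v_i† = Σ_{i=1}^I w_i w_i† as d×d complex matrices (where v v† denotes the outer product matrix with entries v_k · conj(v_l)). Then there exists an I×I complex unitary matrix U such that w_i = Σ_{j=1}^I U_{ij} v_j for all i. -/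
open Matrix

theorem stmt7 {I d : ℕ} (v w : Fin I → (Fin d → ℂ))
    (h : ∑ i, Matrix.vecMulVec (v i) (star (v i)) =
         ∑ i, Matrix.vecMulVec (w i) (star (w i))) :
    ∃ U : Matrix (Fin I) (Fin I) ℂ, U ∈ Matrix.unitaryGroup (Fin I) ℂ ∧
      ∀ i, w i = ∑ j, U i j • v j := by
  classical
  set E := EuclideanSpace ℂ (Fin I)
  -- linear maps u ↦ (∑ k, v i k * u k)_i and similarly for w
  let f : (Fin d → ℂ) →ₗ[ℂ] E :=
    { toFun := fun u => WithLp.toLp 2 (fun i => ∑ k, v i k * u k : Fin I → ℂ)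
      map_add' := by
        intro u u'
        ext i
        show (∑ k, v i k * (u k + u' k)) = (∑ k, v i k * u k) + ∑ k, v i k * u' k
        rw [← Finset.sum_add_distrib]
        exact Finset.sum_congr rfl fun k _ => by ring
      map_smul' := by
        intro c u
        ext i
        show (∑ k, v i k * (c * u k)) = c * ∑ k, v i k * u k
        rw [Finset.mul_sum]
        exact Finset.sum_congr rfl fun k _ => by ring }
  let g : (Fin d → ℂ) →ₗ[ℂ] E :=
    { toFun := fun u => WithLp.toLp 2 (fun i => ∑ k, w i k * u k : Fin I → ℂ)
      map_add' := by
        intro u u'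
        ext i
        show (∑ k, w i k * (u k + u' k)) = (∑ k, w i k * u k) + ∑ k, w i k * u' k
        rw [← Finset.sum_add_distrib]
        exact Finset.sum_congr rfl fun k _ => by ring
      map_smul' := by
        intro c u
        ext i
        show (∑ k, w i k * (c * u k)) = c * ∑ k, w i k * u k
        rw [Finset.mul_sum]
        exact Finset.sum_congr rfl fun k _ => by ring }
  have hf_apply : ∀ u i, f u i = ∑ k, v i k * u k := fun _ _ => rfl
  have hg_apply : ∀ u i, g u i = ∑ k, w i k * u k := fun _ _ => rfl
  -- key: entries of the frame operators agree
  have hentry : ∀ k l, ∑ i, v i k * (starRingEnd ℂ) (v i l)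
      = ∑ i, w i k * (starRingEnd ℂ) (w i l) := by
    intro k l
    have := congrFun (congrFun h k) l
    simpa [Matrix.vecMulVec, Matrix.sum_apply, Complex.star_def] using this
  -- equality of inner products ⟪f u, f u⟫ = ⟪g u, g u⟫
  have hinner : ∀ u : Fin d → ℂ,
      (inner ℂ (f u) (f u) : ℂ) = inner ℂ (g u) (g u) := by
    intro u
    have key : ∀ x : Fin I → (Fin d → ℂ),
        (∑ i, (starRingEnd ℂ) (∑ k, x i k * u k) * (∑ k, x i k * u k))
          = ∑ l, ∑ k, (starRingEnd ℂ) (u l) * u k *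
              ∑ i, x i k * (starRingEnd ℂ) (x i l) := by
      intro x
      have step : ∀ i, (starRingEnd ℂ) (∑ k, x i k * u k) * (∑ k, x i k * u k)
          = ∑ l, ∑ k, (starRingEnd ℂ) (u l) * u k * (x i k * (starRingEnd ℂ) (x i l)) := by
        intro i
        rw [map_sum, Finset.sum_mul]
        refine Finset.sum_congr rfl fun l _ => ?_
        rw [Finset.mul_sum]
        refine Finset.sum_congr rfl fun k _ => ?_
        rw [_root_.map_mul]
        ring
      rw [Finset.sum_congr rfl fun i _ => step i]
      rw [Finset.sum_comm]
      refine Finset.sum_congr rfl fun l _ => ?_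
      rw [Finset.sum_comm]
      refine Finset.sum_congr rfl fun k _ => ?_
      rw [Finset.mul_sum]
    calc (inner ℂ (f u) (f u) : ℂ)
        = ∑ i, (starRingEnd ℂ) (∑ k, v i k * u k) * (∑ k, v i k * u k) := by
          rw [PiLp.inner_apply]; exact Finset.sum_congr rfl fun i _ => by rw [RCLike.inner_apply, hf_apply]; ring
      _ = ∑ l, ∑ k, (starRingEnd ℂ) (u l) * u k *
              ∑ i, v i k * (starRingEnd ℂ) (v i l) := key v
      _ = ∑ l, ∑ k, (starRingEnd ℂ) (u l) * u k *
              ∑ i, w i k * (starRingEnd ℂ) (w i l) := by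
          refine Finset.sum_congr rfl fun l _ => Finset.sum_congr rfl fun k _ => ?_
          rw [hentry k l]
      _ = ∑ i, (starRingEnd ℂ) (∑ k, w i k * u k) * (∑ k, w i k * u k) := (key w).symm
      _ = inner ℂ (g u) (g u) := by rw [PiLp.inner_apply]; exact (Finset.sum_congr rfl fun i _ => by rw [RCLike.inner_apply, hg_apply]; ring).symm
  -- hence equal norms
  have hnorm : ∀ u : Fin d → ℂ, ‖f u‖ = ‖g u‖ := by
    intro u
    have h1 : (‖f u‖ : ℝ) ^ 2 = ‖g u‖ ^ 2 := by
      have := hinner u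
      rw [inner_self_eq_norm_sq_to_K (𝕜 := ℂ), inner_self_eq_norm_sq_to_K (𝕜 := ℂ)] at this
      exact_mod_cast this
    exact (sq_eq_sq₀ (norm_nonneg _) (norm_nonneg _)).mp h1
  -- kernels coincide
  have hker : LinearMap.ker f = LinearMap.ker g := by
    ext u
    simp only [LinearMap.mem_ker]
    constructor <;> intro hu
    · have := hnorm u
      rw [hu, norm_zero] at this
      exact (norm_eq_zero.mp this.symm)
    · have := hnorm u
      rw [hu, norm_zero] at this
      exact (norm_eq_zero.mp this)
  -- build a linear isometry from range f into E sending f u to g u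
  let e := f.quotKerEquivRange
  let g' : ((Fin d → ℂ) ⧸ LinearMap.ker f) →ₗ[ℂ] E :=
    (LinearMap.ker f).liftQ g (le_of_eq hker)
  let L0 : LinearMap.range f →ₗ[ℂ] E := g'.comp (e.symm : _ →ₗ[ℂ] _)
  have hL0 : ∀ u : Fin d → ℂ, L0 ⟨f u, LinearMap.mem_range_self f u⟩ = g u := by
    intro u
    have he : e (Submodule.Quotient.mk u) = ⟨f u, LinearMap.mem_range_self f u⟩ := by
      apply Subtype.ext
      simp [e, LinearMap.quotKerEquivRange_apply_mk]
    have hsymm : e.symm ⟨f u, LinearMap.mem_range_self f u⟩ = Submodule.Quotient.mk u := by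
      rw [← he, LinearEquiv.symm_apply_apply]
    simp only [L0, LinearMap.comp_apply, LinearEquiv.coe_coe, hsymm]
    simp [g']
  have hL0norm : ∀ s : LinearMap.range f, ‖L0 s‖ = ‖s‖ := by
    rintro ⟨x, u, rfl⟩
    rw [hL0 u]
    exact (hnorm u).symm
  let L : LinearMap.range f →ₗᵢ[ℂ] E := ⟨L0, hL0norm⟩
  -- extend to an isometry of E
  let U' : E →ₗᵢ[ℂ] E := L.extend
  have hU' : ∀ u : Fin d → ℂ, U' (f u) = g u := by
    intro u
    have h0 : U' (f u) = L ⟨f u, LinearMap.mem_range_self f u⟩ :=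
      L.extend_apply ⟨f u, LinearMap.mem_range_self f u⟩
    rw [h0]
    exact hL0 u
  -- U' is a linear isometry equivalence
  let Ueqv : E ≃ₗᵢ[ℂ] E := U'.toLinearIsometryEquiv rfl
  have hUeqv : ∀ x : E, Ueqv x = U' x := fun x => rfl
  -- the matrix of U' in the standard orthonormal basis
  let a := EuclideanSpace.basisFun (Fin I) ℂ
  let b := a.map Ueqv
  refine ⟨a.toBasis.toMatrix b, a.toMatrix_orthonormalBasis_mem_unitary b, ?_⟩
  have hUentry : ∀ i j, a.toBasis.toMatrix (⇑b) i j = U' (a j) i := by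
    intro i j
    rw [Module.Basis.toMatrix_apply]
    have hb : (b j : E) = U' (a j) := by
      simp [b, OrthonormalBasis.map_apply, hUeqv]
    rw [OrthonormalBasis.coe_toBasis_repr_apply, hb]
    rfl
  -- mulVec formula for U'
  have hmul : ∀ (x : E) (i : Fin I),
      U' x i = ∑ j, a.toBasis.toMatrix (⇑b) i j * x j := by
    intro x i
    have hx : x = ∑ j, x j • (a j : E) := by
      have := a.toBasis.sum_repr x
      simp only [OrthonormalBasis.coe_toBasis_repr_apply, OrthonormalBasis.coe_toBasis,
        EuclideanSpace.basisFun_repr] at this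
      exact this.symm
    have hsum : U' x = ∑ j, x j • U' (a j) := by
      conv_lhs => rw [hx]
      rw [map_sum]
      exact Finset.sum_congr rfl fun j _ => U'.map_smul _ _
    have hproj : (∑ j, x j • U' (a j) : E) i = ∑ j, (x j • U' (a j) : E) i := by
      exact map_sum (PiLp.projₗ (𝕜 := ℂ) 2 (fun _ : Fin I => ℂ) i)
        (fun j => x j • U' (a j)) Finset.univ
    rw [hsum, hproj]
    refine Finset.sum_congr rfl fun j _ => ?_
    rw [PiLp.smul_apply, hUentry i j, smul_eq_mul, mul_comm]
  -- conclude
  intro i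
  funext k
  have hδ : ∀ (x : Fin I → (Fin d → ℂ)) (i : Fin I),
      (∑ l, x i l * Pi.single (M := fun _ : Fin d => ℂ) k 1 l) = x i k := by
    intro x i
    rw [Finset.sum_eq_single k]
    · simp
    · intro l _ hl
      simp [Pi.single_apply, hl]
    · simp
  have h1 : U' (f (Pi.single k 1)) = g (Pi.single k 1) := hU' _
  have h2 : ∀ j, f (Pi.single k 1) j = v j k := fun j => by
    rw [hf_apply]; exact hδ v j
  have h3 : g (Pi.single k 1) i = w i k := by
    rw [hg_apply]; exact hδ w i
  have h4 : U' (f (Pi.single k 1)) i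
      = ∑ j, a.toBasis.toMatrix (⇑b) i j * f (Pi.single k 1) j := hmul _ i
  have h5 : w i k = ∑ j, a.toBasis.toMatrix (⇑b) i j * v j k := by
    rw [← h3, ← congrArg (fun z : E => z i) h1, h4]
    exact Finset.sum_congr rfl fun j _ => by rw [h2 j]
  calc w i k = ∑ j, a.toBasis.toMatrix (⇑b) i j * v j k := h5
    _ = (∑ j, a.toBasis.toMatrix (⇑b) i j • v j) k := by
        rw [Finset.sum_apply]
        exact Finset.sum_congr rfl fun j _ => rfl
end

section
/- (Example 2) Let σ_1 be the 4×4 complex matrix whose entries are 1/3 at positions (1,1), (2,2), (2,3), (3,2), (3,3) and 0 elsewhere (rows and columns numbered 1 to 4, corresponding to the pairs (0,0),(0,1),(1,0),(1,1) in Kronecker-product ordering), and let σ_2 = diag(2/3, 0, 0, 1/3). Then σ_1 and σ_2 are not equivalent under local unitary transformations: for all 2×2 complex unitary matrices u_1 and u_2, (u_1 ⊗ u_2) σ_1 (u_1 ⊗ u_2)† ≠ σ_2. -/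
open Matrix Kronecker

theorem stmt11
    (σ₁ σ₂ : Matrix (Fin 2 × Fin 2) (Fin 2 × Fin 2) ℂ)
    -- σ₁ has entries 1/3 at the (1-based) positions (1,1),(2,2),(2,3),(3,2),(3,3),
    -- where positions 1,2,3,4 correspond to the pairs (0,0),(0,1),(1,0),(1,1)
    (hσ₁ : σ₁ = Matrix.of fun p q : Fin 2 × Fin 2 =>
      if (p = (0, 0) ∧ q = (0, 0)) ∨
         ((p = (0, 1) ∨ p = (1, 0)) ∧ (q = (0, 1) ∨ q = (1, 0))) then (1/3 : ℂ) else 0)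
    -- σ₂ = diag(2/3, 0, 0, 1/3) in the ordering (0,0),(0,1),(1,0),(1,1)
    (hσ₂ : σ₂ = Matrix.diagonal fun p : Fin 2 × Fin 2 =>
      if p = (0, 0) then (2/3 : ℂ) else if p = (1, 1) then (1/3 : ℂ) else 0) :
    ∀ u₁ u₂ : Matrix (Fin 2) (Fin 2) ℂ,
      u₁ ∈ Matrix.unitaryGroup (Fin 2) ℂ → u₂ ∈ Matrix.unitaryGroup (Fin 2) ℂ →
      (u₁ ⊗ₖ u₂) * σ₁ * (u₁ ⊗ₖ u₂)ᴴ ≠ σ₂ := by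
  intro u v hu hv heq
  have hkT : (u ⊗ₖ v)ᴴ = uᴴ ⊗ₖ vᴴ := by
    ext ⟨i,j⟩ ⟨k,l⟩
    simp [Matrix.conjTranspose_apply, Matrix.kroneckerMap_apply, mul_comm]
  have hu' : uᴴ * u = 1 := Matrix.mem_unitaryGroup_iff'.mp hu
  have hv' : vᴴ * v = 1 := Matrix.mem_unitaryGroup_iff'.mp hv
  have hM : (u ⊗ₖ v)ᴴ * (u ⊗ₖ v) = 1 := by
    rw [hkT, ← Matrix.mul_kronecker_mul, hu', hv', Matrix.one_kronecker_one]
  have hcomm : σ₁ * (u ⊗ₖ v)ᴴ = (u ⊗ₖ v)ᴴ * σ₂ := by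
    calc σ₁ * (u ⊗ₖ v)ᴴ = ((u ⊗ₖ v)ᴴ * (u ⊗ₖ v)) * σ₁ * (u ⊗ₖ v)ᴴ := by rw [hM, one_mul]
    _ = (u ⊗ₖ v)ᴴ * ((u ⊗ₖ v) * σ₁ * (u ⊗ₖ v)ᴴ) := by simp only [Matrix.mul_assoc]
    _ = (u ⊗ₖ v)ᴴ * σ₂ := by rw [heq]
  have h00 := congrFun (congrFun hcomm ((0,0) : Fin 2 × Fin 2)) ((0,0) : Fin 2 × Fin 2)
  have h01 := congrFun (congrFun hcomm ((0,1) : Fin 2 × Fin 2)) ((0,0) : Fin 2 × Fin 2)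
  have h10 := congrFun (congrFun hcomm ((1,0) : Fin 2 × Fin 2)) ((0,0) : Fin 2 × Fin 2)
  have h11 := congrFun (congrFun hcomm ((1,1) : Fin 2 × Fin 2)) ((0,0) : Fin 2 × Fin 2)
  simp [hσ₁, hσ₂, Matrix.mul_apply, Fintype.sum_prod_type, Fin.sum_univ_two,
    Matrix.conjTranspose_apply, Matrix.kroneckerMap_apply, Matrix.diagonal,
    Prod.ext_iff, star_mul'] at h00 h01 h10 h11
  set sa := starRingEnd ℂ (u 0 0) with hsa
  set sb := starRingEnd ℂ (u 0 1) with hsb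
  set sc := starRingEnd ℂ (v 0 0) with hsc
  set sd := starRingEnd ℂ (v 0 1) with hsd
  have z1 : sa * sc = 0 := by linear_combination (-3 : ℂ) * h00
  have hww : sb * sc = sa * sd := by linear_combination (3/2 : ℂ) * h01 - (3/2 : ℂ) * h10
  have z2 : sa * sd = 0 := by
    have hsq : (sa * sd) ^ 2 = 0 := by linear_combination (sb * sd) * z1 - (sa * sd) * hww
    exact sq_eq_zero_iff.mp hsq
  have z3 : sb * sc = 0 := hww.trans z2
  have z4 : sb * sd = 0 := by
    rcases h11 with h | h
    · rw [hsb, h]; simp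
    · rw [hsd, h]; simp
  have hru := congrFun (congrFun (Matrix.mem_unitaryGroup_iff.mp hu) 0) 0
  have hrv := congrFun (congrFun (Matrix.mem_unitaryGroup_iff.mp hv) 0) 0
  simp [Matrix.mul_apply, Fin.sum_univ_two, Matrix.conjTranspose_apply, Matrix.one_apply] at hru hrv
  have hprod := congrArg₂ HMul.hMul hru hrv
  have : (1 : ℂ) = 0 := by
    linear_combination (- hprod) + (u 0 0 * v 0 0) * z1 + (u 0 0 * v 0 1) * z2
      + (u 0 1 * v 0 0) * z3 + (u 0 1 * v 0 1) * z4
  exact one_ne_zero this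
end
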